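/- arXiv:2502.03345 — 2 statements merged into one kernel-verified Lean document; each statement's English description precedes it below -/
import Mathlib

section
/- Let n be even and m prime with m ≡ -1 mod n. Then D^m(e) = H^{-1}(D(e)) in (Z/mZ)^n, where e = (0,...,0,1); explicitly, D^m(0,...,0,1) = (1,0,...,0,1). -/
/-!
As a linear operator, `D = 1 + H` with `H` the left shift. Over `ZMod m` with `m` prime the
Frobenius identity gives `D ^ m = 1 + H ^ m`, and `H ^ m = H⁻¹` because `m ≡ -1 [MOD n]`; hence
`D ^ m = 1 + H⁻¹ = H⁻¹ ∘ D`.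
-/

/-- The Ducci map on `(ZMod m)^n`. -/
def D (m n : ℕ) [NeZero n] (u : Fin n → ZMod m) : Fin n → ZMod m :=
  fun i => u i + u (i + 1)

/-- The inverse cyclic shift (right shift), i.e. `H⁻¹`. -/
def Hinv (m n : ℕ) [NeZero n] (u : Fin n → ZMod m) : Fin n → ZMod m :=
  fun i => u (i - 1)

/-- The tuple `(0, 0, ..., 0, 1)`. -/
def e (m n : ℕ) [NeZero n] : Fin n → ZMod m :=
  fun i => if i.val = n - 1 then 1 else 0

open Fin.NatCast

theorem Fin.val_neg_one_eq_sub_one (n : ℕ) [NeZero n] : ((-1 : Fin n) : ℕ) = n - 1 := by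
  obtain ⟨k, rfl⟩ := Nat.exists_eq_succ_of_ne_zero (NeZero.ne n)
  simp

theorem Fin.val_eq_sub_one_iff {n : ℕ} [NeZero n] {i : Fin n} : (i : ℕ) = n - 1 ↔ i = -1 := by
  rw [← Fin.val_neg_one_eq_sub_one, Fin.val_inj]

theorem Fin.natCast_eq_neg_one_iff {n : ℕ} [NeZero n] (m : ℕ) :
    (m : Fin n) = -1 ↔ m % n = n - 1 := by
  rw [← Fin.val_inj, Fin.val_natCast, Fin.val_neg_one_eq_sub_one]

theorem Fin.zero_ne_neg_one {n : ℕ} [NeZero n] (hn : 2 ≤ n) : (0 : Fin n) ≠ -1 := by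
  rw [Ne, ← Fin.val_eq_sub_one_iff, Fin.val_zero]
  omega

open Polynomial in
theorem one_add_pow_prime {p : ℕ} [Fact p.Prime] {A : Type*} [Ring A] [Algebra (ZMod p) A]
    (a : A) : (1 + a) ^ p = 1 + a ^ p := by
  simpa using congrArg (aeval a) (add_pow_char (1 : (ZMod p)[X]) X p)

namespace Ducci

variable {m n : ℕ} [NeZero n]

variable (m n) in
def shiftLeft : Module.End (ZMod m) (Fin n → ZMod m) where
  toFun u i := u (i + 1)
  map_add' _ _ := rfl
  map_smul' _ _ := rfl

theorem shiftLeft_pow_apply (k : ℕ) (u : Fin n → ZMod m) (i : Fin n) :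
    (shiftLeft m n ^ k) u i = u (i + k) := by
  induction k generalizing u with
  | zero => simp
  | succ k ih =>
    rw [pow_succ, Module.End.mul_apply, ih]
    simp only [shiftLeft, LinearMap.coe_mk, AddHom.coe_mk, Nat.cast_succ, add_assoc]

theorem iterate_D_eq_pow (k : ℕ) (u : Fin n → ZMod m) :
    (D m n)^[k] u = ((1 + shiftLeft m n) ^ k) u := by
  induction k with
  | zero => simp
  | succ k ih =>
    rw [Function.iterate_succ_apply', ih, pow_succ', Module.End.mul_apply]
    rfl

theorem iterate_D_prime_apply (hm : m.Prime) (u : Fin n → ZMod m) (i : Fin n) :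
    (D m n)^[m] u i = u i + u (i + m) := by
  have : Fact m.Prime := ⟨hm⟩
  rw [iterate_D_eq_pow, one_add_pow_prime, LinearMap.add_apply, Pi.add_apply,
    shiftLeft_pow_apply, Module.End.one_apply]

theorem iterate_D_prime_of_natCast_eq_neg_one (hm : m.Prime) (hmn : (m : Fin n) = -1)
    (u : Fin n → ZMod m) : (D m n)^[m] u = Hinv m n (D m n u) := by
  funext i
  rw [iterate_D_prime_apply hm, hmn, ← sub_eq_add_neg, add_comm]
  simp only [Hinv, D, sub_add_cancel]

theorem e_apply (i : Fin n) : e m n i = if i = -1 then 1 else 0 := by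
  simp only [e, Fin.val_eq_sub_one_iff]

theorem Hinv_D_e (hn : 2 ≤ n) :
    Hinv m n (D m n (e m n)) = fun i => if i.val = 0 ∨ i.val = n - 1 then 1 else 0 := by
  funext i
  simp only [Hinv, D, e_apply, sub_add_cancel, sub_eq_neg_self, Fin.val_eq_sub_one_iff,
    ← Fin.val_zero n, Fin.val_inj]
  have := Fin.zero_ne_neg_one hn
  split_ifs <;> simp_all

end Ducci

theorem duci_even (n m : ℕ) [NeZero n] (hn : Even n) (hm : m.Prime) (hmod : m % n = n - 1) :
    (D m n)^[m] (e m n) = Hinv m n (D m n (e m n)) ∧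
    (D m n)^[m] (e m n) = fun i => if i.val = 0 ∨ i.val = n - 1 then 1 else 0 := by
  have hn2 : 2 ≤ n := by
    obtain ⟨r, rfl⟩ := hn
    have := NeZero.ne (r + r)
    omega
  have hmn : (m : Fin n) = -1 := (Fin.natCast_eq_neg_one_iff m).2 hmod
  have hD := Ducci.iterate_D_prime_of_natCast_eq_neg_one hm hmn (e m n)
  exact ⟨hD, hD.trans (Ducci.Hinv_D_e hn2)⟩
end

section
/- Suppose there exist L ≥ 0, α > 0 and β with D^{L+α}(e) = H^β(D^L(e)) where e = (0,...,0,1) ∈ (Z/mZ)^n. Then for every u ∈ (Z/mZ)^n, D^{L+α}(u) = H^β(D^L(u)). -/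
/-- The cyclic left shift on `(ZMod m)^n`. -/
def H (m n : ℕ) [NeZero n] (u : Fin n → ZMod m) : Fin n → ZMod m :=
  fun i => u (i + 1)

/-!
Both `D^(L+α)` and `H^β ∘ D^L` are linear and commute with the shift `H`, and the shifts of
`e` are the standard basis vectors. Two such maps that agree on `e` therefore agree on a basis.
-/

open Fin.NatCast

section

variable (m n : ℕ) [NeZero n]

def Dₗ : Module.End (ZMod m) (Fin n → ZMod m) where
  toFun := D m n
  map_add' u v := by funext i; simp only [D, Pi.add_apply]; ring
  map_smul' c u := by funext i; simp only [D, Pi.smul_apply, smul_eq_mul, RingHom.id_apply, mul_add]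

def Hₗ : Module.End (ZMod m) (Fin n → ZMod m) where
  toFun := H m n
  map_add' _ _ := rfl
  map_smul' _ _ := rfl

@[simp]
theorem coe_Dₗ : ⇑(Dₗ m n) = D m n := rfl

@[simp]
theorem coe_Hₗ : ⇑(Hₗ m n) = H m n := rfl

theorem commute_Dₗ_Hₗ : Commute (Dₗ m n) (Hₗ m n) :=
  LinearMap.ext fun _ => rfl

theorem e_eq_single : e m n = Pi.single (-1) 1 := by
  obtain ⟨k, rfl⟩ := Nat.exists_eq_succ_of_ne_zero (NeZero.ne n)
  funext i
  simp [e, Pi.single_apply, Fin.ext_iff, Fin.coe_neg_one]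

theorem iterate_H_apply (k : ℕ) (u : Fin n → ZMod m) (i : Fin n) :
    (H m n)^[k] u i = u (i + k) := by
  induction k generalizing i with
  | zero => simp
  | succ k ih => rw [Function.iterate_succ_apply', H, ih, Nat.cast_succ, add_assoc, add_comm 1]

theorem iterate_H_single (k : ℕ) (j : Fin n) (c : ZMod m) :
    (H m n)^[k] (Pi.single j c) = Pi.single (j - (k : Fin n)) c := by
  funext i
  simp [iterate_H_apply, Pi.single_apply, eq_sub_iff_add_eq]

theorem exists_iterate_H_e_eq_single (j : Fin n) :
    ∃ k, (H m n)^[k] (e m n) = Pi.single j 1 :=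
  ⟨(-1 - j : Fin n), by rw [e_eq_single, iterate_H_single, Fin.cast_val_eq_self, sub_sub_cancel]⟩

theorem ext_of_commute_Hₗ {f g : Module.End (ZMod m) (Fin n → ZMod m)}
    (hf : Commute f (Hₗ m n)) (hg : Commute g (Hₗ m n)) (he : f (e m n) = g (e m n)) :
    f = g := by
  refine (Pi.basisFun (ZMod m) (Fin n)).ext fun j => ?_
  obtain ⟨k, hk⟩ := exists_iterate_H_e_eq_single m n j
  rw [Pi.basisFun_apply, ← hk, ← coe_Hₗ, ← Module.End.coe_pow, ← Module.End.mul_apply, ← Module.End.mul_apply,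
    (hf.pow_right k).eq, (hg.pow_right k).eq, Module.End.mul_apply, Module.End.mul_apply, he]

end

theorem basic_determines_all_general (m n : ℕ) [NeZero n] (L α β : ℕ)
    (h : (D m n)^[L + α] (e m n) = (H m n)^[β] ((D m n)^[L] (e m n))) :
    ∀ u : Fin n → ZMod m, (D m n)^[L + α] u = (H m n)^[β] ((D m n)^[L] u) := by
  have hcomm := commute_Dₗ_Hₗ m n
  have key : Dₗ m n ^ (L + α) = Hₗ m n ^ β * Dₗ m n ^ L :=
    ext_of_commute_Hₗ m n (hcomm.pow_left _)
      (((Commute.refl _).pow_left β).mul_left (hcomm.pow_left L))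
      (by simpa only [Module.End.mul_apply, Module.End.coe_pow, coe_Dₗ, coe_Hₗ] using h)
  intro u
  simpa only [Module.End.mul_apply, Module.End.coe_pow, coe_Dₗ, coe_Hₗ] using congr($key u)

theorem basic_determines_all (m n : ℕ) [NeZero n] (L α β : ℕ) (hα : 0 < α)
    (h : (D m n)^[L + α] (e m n) = (H m n)^[β] ((D m n)^[L] (e m n))) :
    ∀ u : Fin n → ZMod m, (D m n)^[L + α] u = (H m n)^[β] ((D m n)^[L] u) :=
  basic_determines_all_general m n L α β h
end
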